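/- (Compatibility upgrade for frequency envelopes.) Fix 0 < ε < 1, σ > 0, δ > 0 and 0 < σ̃ < σ(1-ε). Let (c_k)_{k∈Z} and (d_k)_{k∈Z} be positive sequences with c_k ≲ 1 that are (-1,S)-admissible, meaning 2^{-(1-ε)(j-k)} ≲ c_k/c_j ≲ 2^{S(1-ε)(j-k)} for j > k (and similarly for d). Define e_k = d_k + c_k Σ_{j<k} 2^{σ̃(j-k)} d_j. Then e is σ-compatible with c, i.e. c_k Σ_{j<k} 2^{σ(1-ε)(j-k)} e_j ≲ e_k for all k. -/

import Mathlib

/-!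
Write `T_k = ∑_{j<k} 2^{σ̃(j-k)} d_j`, so that `e = d + c T`. Dropping the terms `j' ≥ j` shows
`T_j ≤ 2^{σ̃(k-j)} T_k` for `j < k`; together with `c ≤ C` this gives
`2^{σ(1-ε)(j-k)} e_j ≤ 2^{σ̃(j-k)} d_j + C T_k 2^{(σ(1-ε)-σ̃)(j-k)}`.
Summing over `j < k`, the geometric series converges because `σ̃ < σ(1-ε)`, and
`c_k ∑_{j<k} 2^{σ(1-ε)(j-k)} e_j ≲ c_k T_k ≤ e_k`.
-/

open Function

noncomputable def lowerTerm (s : ℝ) (f : ℤ → ℝ) (k j : ℤ) : ℝ :=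
  if j < k then (2 : ℝ) ^ (s * ((j : ℝ) - k)) * f j else 0

noncomputable def lowerSum (s : ℝ) (f : ℤ → ℝ) (k : ℤ) : ℝ :=
  ∑' j, lowerTerm s f k j

section LowerSum

variable {s t B : ℝ} {c d f g : ℤ → ℝ} {i j k : ℤ}

lemma lowerTerm_nonneg (hf : ∀ j, 0 ≤ f j) : 0 ≤ lowerTerm s f k j := by
  unfold lowerTerm
  split_ifs
  · exact mul_nonneg (Real.rpow_nonneg zero_le_two _) (hf j)
  · exact le_rfl

lemma lowerSum_nonneg (hf : ∀ j, 0 ≤ f j) : 0 ≤ lowerSum s f k :=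
  tsum_nonneg fun _ => lowerTerm_nonneg hf

lemma lowerTerm_add : lowerTerm s (f + g) k j = lowerTerm s f k j + lowerTerm s g k j := by
  unfold lowerTerm
  split_ifs
  · exact mul_add _ _ _
  · exact (add_zero 0).symm

lemma lowerTerm_le_of_rate_le (hst : s ≤ t) (hf : ∀ j, 0 ≤ f j) :
    lowerTerm t f k j ≤ lowerTerm s f k j := by
  unfold lowerTerm
  split_ifs with hjk
  · have hjk' : (j : ℝ) - k ≤ 0 := by
      rw [sub_nonpos]; exact_mod_cast hjk.le
    refine mul_le_mul_of_nonneg_right ?_ (hf j)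
    exact Real.rpow_le_rpow_of_exponent_le one_le_two (mul_le_mul_of_nonpos_right hst hjk')
  · exact le_rfl

/-- Reindexing by `j = k - 1 - n` turns the lower tail of the constant sequence into the
geometric series `∑ₙ 2^{-s(n+1)}`. -/
lemma hasSum_lowerTerm_one (hs : 0 < s) : HasSum (lowerTerm s 1 k) ((2 ^ s - 1)⁻¹) := by
  set r : ℝ := ((2 : ℝ) ^ s)⁻¹
  have hpow : 1 < (2 : ℝ) ^ s := Real.one_lt_rpow one_lt_two hs
  have hr1 : r < 1 := inv_lt_one_of_one_lt₀ hpow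
  have hinj : Injective fun n : ℕ => k - 1 - n := fun m n h => by simp only at h; omega
  have hsupp : ∀ j ∉ Set.range fun n : ℕ => k - 1 - n, lowerTerm s 1 k j = 0 := by
    intro j hj
    have hkj : ¬ j < k := fun hjk => hj ⟨(k - 1 - j).toNat, by dsimp only; omega⟩
    simp only [lowerTerm, if_neg hkj]
  have hterm : ∀ n : ℕ, lowerTerm s 1 k (k - 1 - n) = r * r ^ n := by
    intro n
    have hexp : s * (((k - 1 - n : ℤ) : ℝ) - k) = -s * ((n + 1 : ℕ) : ℝ) := by push_cast; ring
    rw [lowerTerm, if_pos (by omega), hexp, Real.rpow_mul zero_le_two, Real.rpow_natCast,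
      Real.rpow_neg zero_le_two, Pi.one_apply, mul_one, pow_succ, mul_comm]
  rw [← hinj.hasSum_iff hsupp, comp_def, funext hterm]
  have hval : ((2 : ℝ) ^ s - 1)⁻¹ = r * (1 - r)⁻¹ := by
    rw [← mul_inv, mul_sub, mul_one, mul_inv_cancel₀ (by positivity)]
  rw [hval]
  exact (hasSum_geometric_of_lt_one (by positivity) hr1).mul_left r

lemma lowerTerm_le_rpow_mul (hjk : j ≤ k) (hf : ∀ j, 0 ≤ f j) :
    lowerTerm s f j i ≤ 2 ^ (s * ((k : ℝ) - j)) * lowerTerm s f k i := by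
  unfold lowerTerm
  split_ifs with hij hik hik
  · rw [← mul_assoc, ← Real.rpow_add two_pos]
    ring_nf; exact le_rfl
  · omega
  · exact mul_nonneg (Real.rpow_nonneg zero_le_two _)
      (mul_nonneg (Real.rpow_nonneg zero_le_two _) (hf i))
  · simp

lemma lowerSum_le_rpow_mul (hjk : j ≤ k) (hf : ∀ j, 0 ≤ f j)
    (hsum : Summable (lowerTerm s f k)) :
    lowerSum s f j ≤ 2 ^ (s * ((k : ℝ) - j)) * lowerSum s f k := by
  have hle : ∀ i, lowerTerm s f j i ≤ 2 ^ (s * ((k : ℝ) - j)) * lowerTerm s f k i :=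
    fun _ => lowerTerm_le_rpow_mul hjk hf
  rw [lowerSum, lowerSum, ← tsum_mul_left]
  exact (hsum.mul_left _).of_nonneg_of_le (fun _ => lowerTerm_nonneg hf) hle
    |>.tsum_le_tsum hle (hsum.mul_left _)

lemma lowerTerm_mul_lowerSum_le (hc0 : ∀ j, 0 ≤ c j) (hcB : ∀ j, c j ≤ B) (hd : ∀ j, 0 ≤ d j)
    (hsum : Summable (lowerTerm s d k)) :
    lowerTerm t (c * lowerSum s d) k j ≤ B * lowerSum s d k * lowerTerm (t - s) 1 k j := by
  unfold lowerTerm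
  split_ifs with hjk
  · have hcT : c j * lowerSum s d j ≤ B * (2 ^ (s * ((k : ℝ) - j)) * lowerSum s d k) :=
      mul_le_mul (hcB j) (lowerSum_le_rpow_mul hjk.le hd hsum) (lowerSum_nonneg hd)
        ((hc0 j).trans (hcB j))
    calc (2 : ℝ) ^ (t * ((j : ℝ) - k)) * (c j * lowerSum s d j)
        ≤ 2 ^ (t * ((j : ℝ) - k)) * (B * (2 ^ (s * ((k : ℝ) - j)) * lowerSum s d k)) :=
          mul_le_mul_of_nonneg_left hcT (Real.rpow_nonneg zero_le_two _)
      _ = B * lowerSum s d k * (2 ^ (t * ((j : ℝ) - k)) * 2 ^ (s * ((k : ℝ) - j))) := by ring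
      _ = B * lowerSum s d k * (2 ^ ((t - s) * ((j : ℝ) - k)) * 1) := by
          rw [← Real.rpow_add two_pos, mul_one]; ring_nf
  · simp

theorem mul_lowerSum_le (hst : s < t) (hc0 : ∀ j, 0 ≤ c j) (hcB : ∀ j, c j ≤ B)
    (hd : ∀ j, 0 ≤ d j) (hsum : Summable (lowerTerm s d k)) :
    c k * lowerSum t (d + c * lowerSum s d) k
      ≤ (1 + B * (2 ^ (t - s) - 1)⁻¹) * (d + c * lowerSum s d) k := by
  set T := lowerSum s d
  have he : ∀ j, 0 ≤ (d + c * T) j := fun j =>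
    add_nonneg (hd j) (mul_nonneg (hc0 j) (lowerSum_nonneg hd))
  have hgeo := hasSum_lowerTerm_one (k := k) (sub_pos.2 hst)
  have hmaj : ∀ j, lowerTerm t (d + c * T) k j
      ≤ lowerTerm s d k j + B * T k * lowerTerm (t - s) 1 k j := fun j => by
    rw [lowerTerm_add]
    exact add_le_add (lowerTerm_le_of_rate_le hst.le hd) (lowerTerm_mul_lowerSum_le hc0 hcB hd hsum)
  have hmajSum := hsum.hasSum.add (hgeo.mul_left (B * T k))
  have hsumle : lowerSum t (d + c * T) k ≤ T k + B * T k * (2 ^ (t - s) - 1)⁻¹ :=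
    hasSum_le hmaj (hmajSum.summable.of_nonneg_of_le (fun _ => lowerTerm_nonneg he) hmaj).hasSum
      hmajSum
  have hconst : 0 ≤ 1 + B * (2 ^ (t - s) - 1)⁻¹ :=
    add_nonneg zero_le_one <| mul_nonneg ((hc0 k).trans (hcB k))
      (hgeo.nonneg fun _ => lowerTerm_nonneg fun _ => zero_le_one)
  calc c k * lowerSum t (d + c * T) k ≤ c k * (T k + B * T k * (2 ^ (t - s) - 1)⁻¹) :=
        mul_le_mul_of_nonneg_left hsumle (hc0 k)
    _ = (1 + B * (2 ^ (t - s) - 1)⁻¹) * (c k * T k) := by ring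
    _ ≤ (1 + B * (2 ^ (t - s) - 1)⁻¹) * (d + c * T) k :=
        mul_le_mul_of_nonneg_left (le_add_of_nonneg_left (hd k)) hconst

end LowerSum

theorem envelope_compatibility_upgrade_general
    (ε σ σt : ℝ) (hσtσ : σt < σ * (1 - ε))
    (c d : ℤ → ℝ) (hc : ∀ k, 0 < c k) (hd : ∀ k, 0 < d k)
    (Cb : ℝ) (hCb : 0 < Cb) (hcb : ∀ k, c k ≤ Cb)
    (hsum : ∀ k : ℤ, Summable fun j : ℤ =>
      if j < k then (2:ℝ) ^ (σt * ((j:ℝ) - k)) * d j else 0) :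
    ∀ e : ℤ → ℝ,
      (e = fun k => d k + c k *
        ∑' j : ℤ, if j < k then (2:ℝ) ^ (σt * ((j:ℝ) - k)) * d j else 0) →
      ∃ C : ℝ, 0 < C ∧ ∀ k : ℤ,
        c k * (∑' j : ℤ, if j < k then (2:ℝ) ^ (σ * (1 - ε) * ((j:ℝ) - k)) * e j else 0)
          ≤ C * e k := by
  rintro e rfl
  have hgap : 0 < (2 : ℝ) ^ (σ * (1 - ε) - σt) - 1 :=
    sub_pos.2 (Real.one_lt_rpow one_lt_two (sub_pos.2 hσtσ))
  refine ⟨1 + Cb * ((2 : ℝ) ^ (σ * (1 - ε) - σt) - 1)⁻¹, by positivity, fun k => ?_⟩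
  exact mul_lowerSum_le hσtσ (fun j => (hc j).le) hcb (fun j => (hd j).le) (hsum k)

/-- Compatibility upgrade for frequency envelopes: if `c, d` are positive
`(-1,S)`-admissible sequences with `c` bounded, and
`e_k = d_k + c_k Σ_{j<k} 2^{σ̃(j-k)} d_j` with `0 < σ̃ < σ(1-ε)`,
then `e` is `σ`-compatible with `c`, i.e.
`c_k Σ_{j<k} 2^{σ(1-ε)(j-k)} e_j ≲ e_k` for all `k`. -/
theorem envelope_compatibility_upgrade
    (ε σ σt S : ℝ) (hε : 0 < ε) (hε1 : ε < 1) (hσ : 0 < σ)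
    (hσt : 0 < σt) (hσtσ : σt < σ * (1 - ε))
    (c d : ℤ → ℝ) (hc : ∀ k, 0 < c k) (hd : ∀ k, 0 < d k)
    (Cb : ℝ) (hCb : 0 < Cb) (hcb : ∀ k, c k ≤ Cb)
    (hadm_c : ∀ j k : ℤ, k < j →
      (2:ℝ) ^ (-((1 - ε) * ((j:ℝ) - k))) ≤ Cb * (c k / c j) ∧
      c k / c j ≤ Cb * (2:ℝ) ^ (S * (1 - ε) * ((j:ℝ) - k)))
    (hadm_d : ∀ j k : ℤ, k < j →
      (2:ℝ) ^ (-((1 - ε) * ((j:ℝ) - k))) ≤ Cb * (d k / d j) ∧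
      d k / d j ≤ Cb * (2:ℝ) ^ (S * (1 - ε) * ((j:ℝ) - k)))
    (hsum : ∀ k : ℤ, Summable fun j : ℤ =>
      if j < k then (2:ℝ) ^ (σt * ((j:ℝ) - k)) * d j else 0) :
    ∀ e : ℤ → ℝ,
      (e = fun k => d k + c k *
        ∑' j : ℤ, if j < k then (2:ℝ) ^ (σt * ((j:ℝ) - k)) * d j else 0) →
      ∃ C : ℝ, 0 < C ∧ ∀ k : ℤ,
        c k * (∑' j : ℤ, if j < k then (2:ℝ) ^ (σ * (1 - ε) * ((j:ℝ) - k)) * e j else 0)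
          ≤ C * e k :=
  envelope_compatibility_upgrade_general ε σ σt hσtσ c d hc hd Cb hCb hcb hsum
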